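/- arXiv:1612.06271 — 3 statements merged into one kernel-verified Lean document; each statement's English description precedes it below -/
import Mathlib

section
/- Let A be an n×n real matrix. A is a P-matrix (all principal minors positive) if and only if A does not reverse the sign of any nonzero vector, i.e., for every nonzero x ∈ ℝⁿ there exists an index i with x_i · (Ax)_i > 0. -/
/-!
Expanding `det (B + diagonal d)` row by row gives `∑ t, (∏ i ∈ t, d i) * det B[tᶜ]`, where `B[s]` is
the principal submatrix on `s`; it is positive when all principal minors of `B` are positive and
`d ≥ 0`. If some `x ≠ 0` had `x i * (B x) i ≤ 0` for all `i`, then on the support `s` of `x` the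
nonnegative diagonal `d i = -(x i * (B x) i) / x i ^ 2` makes `(B[s] + diagonal d) x = 0`,
contradicting this expansion.

Conversely, not reversing signs passes to principal submatrices and to every `(1 - t) • 1 + t • B`
with `t ∈ [0, 1]`, and it forces a nonzero determinant. Along this segment the determinant moves
from `1` to `det B` without vanishing, so `det B > 0`.
-/

open Matrix Finset

/-- A real square matrix is a P-matrix if all of its principal minors are positive. -/
def IsPMatrix {n : ℕ} (A : Matrix (Fin n) (Fin n) ℝ) : Prop :=
  ∀ s : Finset (Fin n), s.Nonempty →
    0 < (A.submatrix (fun i : s => (i : Fin n)) (fun j : s => (j : Fin n))).det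

namespace Matrix

variable {m R : Type*}

def principalSubmatrix (B : Matrix m m R) (s : Finset m) : Matrix s s R :=
  B.submatrix (↑) (↑)

theorem principalSubmatrix_mulVec_comp_val [Fintype m] [NonUnitalNonAssocSemiring R]
    (B : Matrix m m R) {s : Finset m} {x : m → R} (hx : ∀ j ∉ s, x j = 0) (i : s) :
    (B.principalSubmatrix s *ᵥ (x ∘ (↑))) i = (B *ᵥ x) i := by
  simp only [mulVec, dotProduct, principalSubmatrix, submatrix_apply, Function.comp_apply]
  rw [Finset.sum_coe_sort s fun j => B i j * x j]
  exact Finset.sum_subset (Finset.subset_univ s) fun j _ hj => by rw [hx j hj, mul_zero]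

variable [DecidableEq m]

theorem det_principalSubmatrix_principalSubmatrix [CommRing R] (B : Matrix m m R)
    (s : Finset m) (t : Finset s) :
    ((B.principalSubmatrix s).principalSubmatrix t).det =
      (B.principalSubmatrix (t.map (Function.Embedding.subtype _))).det := by
  rw [← det_submatrix_equiv_self (t.equivMap (Function.Embedding.subtype _))]
  rfl

theorem det_add_diagonal [Fintype m] [CommRing R] (B : Matrix m m R) (d : m → R) :
    (B + diagonal d).det = ∑ t : Finset m, (∏ i ∈ t, d i) * (B.principalSubmatrix tᶜ).det := by
  have hrows : B + diagonal d = (fun i => d i • (1 : Matrix m m R) i) + fun i => B i := by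
    ext i j
    by_cases h : i = j <;> simp [h, add_comm]
  rw [det, hrows, detRowAlternating.map_add_univ]
  refine Finset.sum_congr rfl fun t _ => ?_
  let N : m → m → R := tᶜ.piecewise (fun i => B i) fun i => (1 : Matrix m m R) i
  have hN : t.piecewise (fun i => d i • (1 : Matrix m m R) i) (fun i => B i) =
      t.piecewise (fun i => d i • N i) N := by
    funext i
    by_cases hi : i ∈ t <;> simp [N, hi]
  rw [hN]
  exact (detRowAlternating.toMultilinearMap.map_piecewise_smul d N t).trans
    (congrArg _ (det_piecewise_one_eq_submatrix_det B tᶜ))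

section Ordered

variable [CommRing R] [PartialOrder R]

def HasPosPrincipalMinors (B : Matrix m m R) : Prop :=
  ∀ t : Finset m, 0 < (B.principalSubmatrix t).det

def IsSignNonreversing [Fintype m] (B : Matrix m m R) : Prop :=
  ∀ x : m → R, x ≠ 0 → ∃ i, 0 < x i * (B *ᵥ x) i

theorem hasPosPrincipalMinors_iff_forall_nonempty [IsStrictOrderedRing R] (B : Matrix m m R) :
    HasPosPrincipalMinors B ↔ ∀ t : Finset m, t.Nonempty → 0 < (B.principalSubmatrix t).det := by
  refine ⟨fun hB t _ => hB t, fun hB t => ?_⟩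
  obtain rfl | ht := t.eq_empty_or_nonempty
  · simp [det_isEmpty]
  · exact hB t ht

theorem HasPosPrincipalMinors.principalSubmatrix {B : Matrix m m R} (hB : HasPosPrincipalMinors B)
    (s : Finset m) : HasPosPrincipalMinors (B.principalSubmatrix s) := fun t => by
  rw [det_principalSubmatrix_principalSubmatrix]
  exact hB _

theorem HasPosPrincipalMinors.det_add_diagonal_pos [Fintype m] [IsStrictOrderedRing R]
    {B : Matrix m m R} (hB : HasPosPrincipalMinors B) {d : m → R} (hd : 0 ≤ d) :
    0 < (B + diagonal d).det := by
  rw [det_add_diagonal]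
  refine Finset.sum_pos' (fun t _ => ?_) ⟨∅, Finset.mem_univ _, by simpa using hB ∅ᶜ⟩
  exact mul_nonneg (Finset.prod_nonneg fun i _ => hd i) (hB tᶜ).le

theorem IsSignNonreversing.principalSubmatrix [Fintype m] {B : Matrix m m R}
    (hB : IsSignNonreversing B) (s : Finset m) : IsSignNonreversing (B.principalSubmatrix s) := by
  intro y hy
  let x : m → R := Function.extend (↑) y 0
  have hxy : x ∘ (↑) = y := Function.extend_comp Subtype.val_injective y 0
  have hx_out : ∀ j ∉ s, x j = 0 := fun j hj =>
    Function.extend_apply' _ _ _ fun ⟨a, ha⟩ => hj (ha ▸ a.2)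
  obtain ⟨i, hi⟩ := hB x fun hx => hy (by rw [← hxy, hx]; rfl)
  have his : i ∈ s := by
    by_contra h
    simp [hx_out i h] at hi
  refine ⟨⟨i, his⟩, ?_⟩
  rw [← hxy, principalSubmatrix_mulVec_comp_val B hx_out]
  exact hi

theorem IsSignNonreversing.det_ne_zero [Fintype m] [IsDomain R] {B : Matrix m m R}
    (hB : IsSignNonreversing B) : B.det ≠ 0 := by
  intro h
  obtain ⟨v, hv, hBv⟩ := exists_mulVec_eq_zero_iff.2 h
  obtain ⟨i, hi⟩ := hB v hv
  simp [hBv] at hi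

end Ordered

section OrderedField

variable [Fintype m] [Field R] [LinearOrder R] [IsStrictOrderedRing R]

theorem HasPosPrincipalMinors.isSignNonreversing {B : Matrix m m R}
    (hB : HasPosPrincipalMinors B) : IsSignNonreversing B := by
  intro x hx
  by_contra! hrev
  let s : Finset m := univ.filter (x · ≠ 0)
  have hx_out : ∀ j ∉ s, x j = 0 := by simp [s]
  have hx_ne : ∀ i : s, x i ≠ 0 := fun i => (mem_filter.1 i.2).2
  let d : s → R := fun i => -(x i * (B *ᵥ x) i) / x i ^ 2
  have hd : 0 ≤ d := fun i => div_nonneg (neg_nonneg.2 (hrev i)) (sq_nonneg _)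
  have hker : (B.principalSubmatrix s + diagonal d) *ᵥ (x ∘ (↑)) = 0 := by
    funext i
    rw [add_mulVec, Pi.add_apply, principalSubmatrix_mulVec_comp_val B hx_out, mulVec_diagonal]
    simp only [d, Function.comp_apply, Pi.zero_apply]
    field_simp [hx_ne i]
    ring
  have hy : x ∘ ((↑) : s → m) ≠ 0 := by
    obtain ⟨j, hj⟩ := Function.ne_iff.1 hx
    exact Function.ne_iff.2 ⟨⟨j, mem_filter.2 ⟨mem_univ j, hj⟩⟩, hj⟩
  exact ((hB.principalSubmatrix s).det_add_diagonal_pos hd).ne'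
    (exists_mulVec_eq_zero_iff.1 ⟨_, hy, hker⟩)

theorem IsSignNonreversing.lineMap_one {B : Matrix m m R} (hB : IsSignNonreversing B)
    {t : R} (ht : t ∈ Set.Icc 0 1) : IsSignNonreversing (AffineMap.lineMap 1 B t) := by
  intro x hx
  obtain ⟨i, hi⟩ := hB x hx
  have hxi : x i ≠ 0 := by
    intro h
    simp [h] at hi
  refine ⟨i, ?_⟩
  have hexp : x i * (AffineMap.lineMap 1 B t *ᵥ x) i =
      (1 - t) * x i ^ 2 + t * (x i * (B *ᵥ x) i) := by
    simp only [AffineMap.lineMap_apply_module, add_mulVec, smul_mulVec, one_mulVec,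
      Pi.add_apply, Pi.smul_apply, smul_eq_mul]
    ring
  rw [hexp]
  obtain rfl | htpos := ht.1.eq_or_lt
  · simp only [sub_zero, one_mul, zero_mul, add_zero]
    positivity
  · exact add_pos_of_nonneg_of_pos (mul_nonneg (sub_nonneg.2 ht.2) (sq_nonneg _))
      (mul_pos htpos hi)

end OrderedField

theorem IsSignNonreversing.det_pos [Fintype m] {B : Matrix m m ℝ} (hB : IsSignNonreversing B) :
    0 < B.det := by
  let g : ℝ → ℝ := fun t => (AffineMap.lineMap 1 B t).det
  have hg : Continuous g := by fun_prop
  by_contra! hle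
  obtain ⟨t, ht, hgt⟩ :=
    intermediate_value_Icc' zero_le_one hg.continuousOn ⟨by simpa [g] using hle, by simp [g]⟩
  exact (hB.lineMap_one ht).det_ne_zero hgt

theorem IsSignNonreversing.hasPosPrincipalMinors [Fintype m] {B : Matrix m m ℝ}
    (hB : IsSignNonreversing B) : HasPosPrincipalMinors B :=
  fun s => (hB.principalSubmatrix s).det_pos

end Matrix

/-- Sign-reversal characterization of P-matrices: `A` is a P-matrix iff for every
nonzero vector `x` there is an index `i` with `x i * (A x) i > 0`. -/
theorem stmt0 {n : ℕ} (A : Matrix (Fin n) (Fin n) ℝ) :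
    IsPMatrix A ↔ ∀ x : Fin n → ℝ, x ≠ 0 → ∃ i, 0 < x i * A.mulVec x i :=
  (hasPosPrincipalMinors_iff_forall_nonempty A).symm.trans
    ⟨HasPosPrincipalMinors.isSignNonreversing, IsSignNonreversing.hasPosPrincipalMinors⟩
end

section
/- Let A be an n×n K-matrix (a Z-matrix whose principal minors are all positive) and let B be an entrywise nonnegative n×n real matrix. Then the spectral radius of A⁻¹B is strictly less than 1 if and only if A − B is a K-matrix. -/
/-- A Z-matrix has nonpositive off-diagonal entries. -/
def IsZMatrix {n : ℕ} (A : Matrix (Fin n) (Fin n) ℝ) : Prop :=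
  ∀ i j, i ≠ j → A i j ≤ 0

/-- A K-matrix is a Z-matrix that is also a P-matrix. -/
def IsKMatrix {n : ℕ} (A : Matrix (Fin n) (Fin n) ℝ) : Prop :=
  IsZMatrix A ∧ IsPMatrix A

/-!
For a Z-matrix `M`, being a K-matrix is equivalent to semipositivity: `M x > 0` for some
`x > 0`. A semipositive Z-matrix has semipositive principal submatrices and a positive
determinant (deform it to the identity through semipositive Z-matrices), and a K-matrix is
semipositive by induction, through the Schur complement of a diagonal entry.

If `(A - B) x > 0` with `x > 0`, then for `|c| ≤ 1` the matrix `(A - c B) diag(x)` is strictly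
diagonally dominant; taking `c = μ⁻¹` shows that no `μ` with `|μ| ≥ 1` is an eigenvalue of
`A⁻¹ B`. Conversely, if `ρ(A⁻¹ B) < 1` then `A - t B` is a nonsingular Z-matrix for every
`t ∈ [0, 1]`. Along this path semipositivity is an open condition, and also a closed one,
since for nonsingular Z-matrices it is equivalent to `(A - t B)⁻¹ ≥ 0`; so it passes from `A`
to `A - B`.
-/

open Filter Topology Set

namespace Matrix

variable {ι : Type*} [Fintype ι]

def IsSemipositive (M : Matrix ι ι ℝ) : Prop :=
  ∃ x : ι → ℝ, (∀ i, 0 < x i) ∧ ∀ i, 0 < (M *ᵥ x) i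

theorem isOpen_setOf_isSemipositive : IsOpen {M : Matrix ι ι ℝ | M.IsSemipositive} := by
  refine isOpen_iff_mem_nhds.2 fun M ⟨x, hx, hMx⟩ => ?_
  have hcont : ∀ i, Continuous fun N : Matrix ι ι ℝ => (N *ᵥ x) i := fun i => by fun_prop
  filter_upwards [eventually_all.2 fun i =>
    continuousAt_const.eventually_lt (hcont i).continuousAt (hMx i)] with N hN
  exact ⟨x, hx, hN⟩

section

variable [DecidableEq ι]

lemma mulVec_apply_eq_add_sum_erase {R : Type*} [NonUnitalNonAssocSemiring R] (M : Matrix ι ι R)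
    (x : ι → R) (i : ι) :
    (M *ᵥ x) i = M i i * x i + ∑ j ∈ Finset.univ.erase i, M i j * x j :=
  (Finset.add_sum_erase _ _ (Finset.mem_univ i)).symm

theorem det_ne_zero_of_dominated {K : Type*} [RCLike K] (C : Matrix ι ι K) {M : Matrix ι ι ℝ}
    (hM : M.IsSemipositive) (hdiag : ∀ i, M i i ≤ ‖C i i‖)
    (hoff : ∀ i j, i ≠ j → ‖C i j‖ ≤ -M i j) : C.det ≠ 0 := by
  obtain ⟨x, hx, hMx⟩ := hM
  have hCx : (C * diagonal fun i => (x i : K)).det ≠ 0 := by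
    refine det_ne_zero_of_sum_row_lt_diag fun i => ?_
    simp only [mul_diagonal, norm_mul, RCLike.norm_ofReal, abs_of_pos (hx _)]
    calc ∑ j ∈ Finset.univ.erase i, ‖C i j‖ * x j
        ≤ ∑ j ∈ Finset.univ.erase i, -M i j * x j :=
          Finset.sum_le_sum fun j hj =>
            mul_le_mul_of_nonneg_right (hoff i j (Finset.ne_of_mem_erase hj).symm) (hx j).le
      _ < M i i * x i := by
          have := hMx i
          rw [mulVec_apply_eq_add_sum_erase] at this
          simp only [neg_mul, Finset.sum_neg_distrib]
          linarith
      _ ≤ ‖C i i‖ * x i := mul_le_mul_of_nonneg_right (hdiag i) (hx i).le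
  rw [det_mul] at hCx
  exact left_ne_zero_of_mul hCx

variable {M : Matrix ι ι ℝ}

theorem IsSemipositive.det_ne_zero (hZ : ∀ i j, i ≠ j → M i j ≤ 0) (hM : M.IsSemipositive) :
    M.det ≠ 0 :=
  det_ne_zero_of_dominated M hM (fun i => Real.le_norm_self _)
    (fun i j hij => by rw [Real.norm_eq_abs, abs_of_nonpos (hZ i j hij)])

theorem IsSemipositive.nonneg_of_mulVec_nonneg (hZ : ∀ i j, i ≠ j → M i j ≤ 0)
    (hM : M.IsSemipositive) {z : ι → ℝ} (hz : ∀ i, 0 ≤ (M *ᵥ z) i) (i : ι) :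
    0 ≤ z i := by
  obtain ⟨x, hx, hMx⟩ := hM
  by_contra! hzi
  obtain ⟨k, -, hk⟩ :=
    Finset.exists_max_image Finset.univ (fun j => -z j / x j) ⟨i, Finset.mem_univ i⟩
  set c := -z k / x k
  have hc : 0 < c := (div_pos (neg_pos.2 hzi) (hx i)).trans_le (hk i (Finset.mem_univ i))
  -- `w := z + c x` is nonnegative and vanishes at `k`, so `(M w) k ≤ 0` although `M w > 0`.
  set w := z + c • x
  have hw : ∀ j, 0 ≤ w j := fun j => by
    have := (div_le_iff₀ (hx j)).1 (hk j (Finset.mem_univ j))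
    simp only [w, Pi.add_apply, Pi.smul_apply, smul_eq_mul]
    linarith
  have hwk : w k = 0 := by
    simp only [w, c, Pi.add_apply, Pi.smul_apply, smul_eq_mul, div_mul_cancel₀ _ (hx k).ne']
    ring
  have hMw : (M *ᵥ w) k ≤ 0 := by
    rw [mulVec_apply_eq_add_sum_erase, hwk, mul_zero, zero_add]
    exact Finset.sum_nonpos fun j hj =>
      mul_nonpos_of_nonpos_of_nonneg (hZ k j (Finset.ne_of_mem_erase hj).symm) (hw j)
  have : 0 < (M *ᵥ w) k := by
    simp only [w, mulVec_add, mulVec_smul, Pi.add_apply, Pi.smul_apply, smul_eq_mul]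
    nlinarith [hz k, hMx k]
  linarith

theorem IsSemipositive.inv_nonneg (hZ : ∀ i j, i ≠ j → M i j ≤ 0) (hM : M.IsSemipositive)
    (i j : ι) : 0 ≤ M⁻¹ i j := by
  have hdet : IsUnit M.det := (hM.det_ne_zero hZ).isUnit
  have := hM.nonneg_of_mulVec_nonneg hZ (z := M⁻¹ *ᵥ Pi.single j 1) (fun k => by
    rw [mulVec_mulVec, mul_nonsing_inv _ hdet, one_mulVec]
    exact (Pi.single_nonneg.2 zero_le_one : (0 : ι → ℝ) ≤ Pi.single j 1) k) i
  simpa [mulVec_single] using this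

theorem isSemipositive_of_inv_nonneg (hdet : M.det ≠ 0) (hinv : ∀ i j, 0 ≤ M⁻¹ i j) :
    M.IsSemipositive := by
  refine ⟨M⁻¹ *ᵥ fun _ => 1, fun i => ?_, fun i => ?_⟩
  · -- a zero row `i` of `M⁻¹` would make `(M⁻¹ * M) i i = 0`
    refine lt_of_le_of_ne (Finset.sum_nonneg fun j _ => mul_nonneg (hinv i j) zero_le_one)
      fun h => ?_
    have hrow : ∀ j, M⁻¹ i j = 0 := by
      simpa using (Finset.sum_eq_zero_iff_of_nonneg fun j _ =>
        mul_nonneg (hinv i j) zero_le_one).1 h.symm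
    have := congrFun (congrFun (nonsing_inv_mul M hdet.isUnit) i) i
    simp [mul_apply, hrow] at this
  · rw [mulVec_mulVec, mul_nonsing_inv _ hdet.isUnit, one_mulVec]
    exact one_pos

theorem IsSemipositive.submatrix (hZ : ∀ i j, i ≠ j → M i j ≤ 0) (hM : M.IsSemipositive)
    {κ : Type*} [Fintype κ] {f : κ → ι} (hf : Function.Injective f) :
    (M.submatrix f f).IsSemipositive := by
  obtain ⟨x, hx, hMx⟩ := hM
  refine ⟨x ∘ f, fun k => hx _, fun k => (hMx (f k)).trans_le ?_⟩
  have hsum : (M.submatrix f f *ᵥ (x ∘ f)) k =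
      ∑ j ∈ Finset.univ.map ⟨f, hf⟩, M (f k) j * x j := by
    simp [mulVec, dotProduct]
  rw [hsum, mulVec, dotProduct, ← Finset.sum_add_sum_compl (Finset.univ.map ⟨f, hf⟩)]
  refine add_le_of_nonpos_right (Finset.sum_nonpos fun j hj => ?_)
  refine mul_nonpos_of_nonpos_of_nonneg (hZ _ _ fun h => Finset.mem_compl.1 hj ?_) (hx j).le
  exact h ▸ Finset.mem_map_of_mem _ (Finset.mem_univ k)

theorem IsSemipositive.det_pos (hZ : ∀ i j, i ≠ j → M i j ≤ 0) (hM : M.IsSemipositive) :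
    0 < M.det := by
  set N : ℝ → Matrix ι ι ℝ := fun t => (1 - t) • 1 + t • M
  have hN : ∀ t ∈ Icc (0 : ℝ) 1, (N t).det ≠ 0 := by
    rintro t ⟨ht0, ht1⟩
    refine IsSemipositive.det_ne_zero (fun i j hij => ?_) ?_
    · simp [N, one_apply_ne hij, mul_nonpos_of_nonneg_of_nonpos ht0 (hZ i j hij)]
    · obtain ⟨x, hx, hMx⟩ := hM
      refine ⟨x, hx, fun i => ?_⟩
      simp only [N, add_mulVec, smul_mulVec, one_mulVec, Pi.add_apply, Pi.smul_apply,
        smul_eq_mul]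
      rcases ht0.eq_or_lt with rfl | ht0
      · simpa using hx i
      · nlinarith [hx i, hMx i]
  by_contra! hle
  have hcont : ContinuousOn (fun t => (N t).det) (Icc 0 1) := by
    simp only [N]; fun_prop
  obtain ⟨t, ht, h0⟩ := intermediate_value_Icc' zero_le_one hcont
    ⟨by simpa [N] using hle, by simp [N]⟩
  exact hN t ht h0

theorem IsSemipositive.of_continuous {N : ℝ → Matrix ι ι ℝ} (hN : Continuous N) {a b : ℝ}
    (hab : a ≤ b) (hZ : ∀ t ∈ Icc a b, ∀ i j, i ≠ j → N t i j ≤ 0)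
    (hdet : ∀ t ∈ Icc a b, (N t).det ≠ 0) (ha : (N a).IsSemipositive) :
    (N b).IsSemipositive := by
  set S := {t | (N t).IsSemipositive}
  have hS : S ∩ Icc a b =
      Icc a b ∩ (fun t => (N t)⁻¹) ⁻¹' {P | ∀ i j, 0 ≤ P i j} := by
    ext t
    refine ⟨fun ⟨hs, ht⟩ => ⟨ht, hs.inv_nonneg (hZ t ht)⟩,
      fun ⟨ht, hs⟩ => ⟨isSemipositive_of_inv_nonneg (hdet t ht) hs, ht⟩⟩
  have hclosed : IsClosed (S ∩ Icc a b) := by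
    rw [hS]
    refine ContinuousOn.preimage_isClosed_of_isClosed (fun t ht => ?_) isClosed_Icc ?_
    · refine ((continuousAt_matrix_inv _ ?_).comp hN.continuousAt).continuousWithinAt
      exact NormedRing.inverse_continuousAt (Units.mk0 _ (hdet t ht))
    · simp only [ofPred_forall]
      exact isClosed_iInter fun i => isClosed_iInter fun j =>
        isClosed_le continuous_const ((continuous_apply j).comp (continuous_apply i))
  refine hclosed.Icc_subset_of_forall_mem_nhdsWithin ha (fun t ⟨ht, _⟩ => ?_) ⟨hab, le_rfl⟩
  exact mem_nhdsWithin_of_mem_nhds (hN.continuousAt.preimage_mem_nhds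
    (isOpen_setOf_isSemipositive.mem_nhds ht))

end

noncomputable def schurComplementNone (M : Matrix (Option ι) (Option ι) ℝ) : Matrix ι ι ℝ :=
  of fun i j => M (some i) (some j) - M (some i) none * M none (some j) / M none none

theorem IsSemipositive.of_schurComplementNone {M : Matrix (Option ι) (Option ι) ℝ}
    (hZ : ∀ i j, i ≠ j → M i j ≤ 0) (ha : 0 < M none none)
    (hS : M.schurComplementNone.IsSemipositive) : M.IsSemipositive := by
  obtain ⟨y, hy, hSy⟩ := hS
  set S := M.schurComplementNone
  set a := M none none
  set r := ∑ j, M none (some j) * y j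
  have hr : r / a ≤ 0 := div_nonpos_of_nonpos_of_nonneg (Finset.sum_nonpos fun j _ =>
    mul_nonpos_of_nonpos_of_nonneg (hZ _ _ (Option.some_ne_none j).symm) (hy j).le) ha.le
  have hSy_eq : ∀ i, (S *ᵥ y) i = ∑ j, M (some i) (some j) * y j - M (some i) none * (r / a) :=
    fun i => by
      simp only [S, schurComplementNone, mulVec, dotProduct, of_apply, sub_mul,
        Finset.sum_sub_distrib, r, Finset.mul_sum, Finset.sum_div]
      congr 1
      exact Finset.sum_congr rfl fun j _ => by ring
  -- `M` maps `(-r / a, y)` to `(0, S y)`; raising the first coordinate by a small `ε > 0`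
  -- makes the image positive.
  obtain ⟨ε, hε, hε0⟩ : ∃ ε : ℝ, (∀ i, 0 < (S *ᵥ y) i + M (some i) none * ε) ∧ 0 < ε := by
    have hnear : ∀ᶠ ε in 𝓝 (0 : ℝ), ∀ i, 0 < (S *ᵥ y) i + M (some i) none * ε :=
      eventually_all.2 fun i =>
        continuousAt_const.eventually_lt (by fun_prop) (by simpa using hSy i)
    exact ((hnear.filter_mono (nhdsWithin_le_nhds (s := Ioi 0))).and self_mem_nhdsWithin).exists
  refine ⟨fun o => o.elim (ε - r / a) y, ?_, ?_⟩
  · rintro (_ | i)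
    · simp only [Option.elim]
      linarith
    · exact hy i
  · rintro (_ | i) <;> simp only [mulVec, dotProduct, Fintype.sum_option, Option.elim]
    · rw [mul_sub, mul_div_cancel₀ _ ha.ne', sub_add_cancel]
      exact mul_pos ha hε0
    · have := hε i
      rw [hSy_eq] at this
      linarith

theorem det_eq_mul_det_schurComplementNone [DecidableEq ι] (M : Matrix (Option ι) (Option ι) ℝ)
    (ha : M none none ≠ 0) : M.det = M none none * M.schurComplementNone.det := by
  let e : ι ⊕ Unit ≃ Option ι := (Equiv.optionEquivSumPUnit ι).symm
  let D : Matrix Unit Unit ℝ := of fun _ _ => M none none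
  let _ : Invertible D := ⟨of fun _ _ => (M none none)⁻¹, by ext; simp [D, mul_apply, ha],
    by ext; simp [D, mul_apply, ha]⟩
  have hblocks : M.submatrix e e = fromBlocks (M.submatrix some some)
      (of fun i _ => M (some i) none) (of fun _ j => M none (some j)) D := by
    ext (i | _) (j | _) <;> rfl
  rw [← det_submatrix_equiv_self e, hblocks, det_fromBlocks₂₂]
  congr 1
  · simp [D]
  · congr 1
    ext i j
    simp [schurComplementNone, mul_apply, div_eq_mul_inv, D]
    ring

variable [DecidableEq ι]

theorem mem_spectrum_iff_det_sub_inv_smul_eq_zero {K : Type*} [Field K] {A B C : Matrix ι ι K}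
    (hAC : A * C = B) (hA : A.det ≠ 0) {μ : K} (hμ : μ ≠ 0) :
    μ ∈ spectrum K C ↔ (A - μ⁻¹ • B).det = 0 := by
  have hfactor : A * (algebraMap K _ μ - C) = μ • (A - μ⁻¹ • B) := by
    rw [mul_sub, hAC, Algebra.algebraMap_eq_smul_one, mul_smul_comm, mul_one, smul_sub, smul_smul,
      mul_inv_cancel₀ hμ, one_smul]
  have hdet := congrArg det hfactor
  rw [det_mul, det_smul] at hdet
  rw [spectrum.mem_iff, isUnit_iff_isUnit_det, isUnit_iff_ne_zero, not_not]
  constructor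
  · intro h
    rw [h, mul_zero] at hdet
    exact (mul_eq_zero.1 hdet.symm).resolve_left (pow_ne_zero _ hμ)
  · intro h
    rw [h, mul_zero] at hdet
    exact (mul_eq_zero.1 hdet).resolve_left hA

theorem det_map_sub_smul_ne_zero {A B : Matrix ι ι ℝ} (hA : ∀ i j, i ≠ j → A i j ≤ 0)
    (hB : ∀ i j, 0 ≤ B i j) (hAB : (A - B).IsSemipositive) {c : ℂ} (hc : ‖c‖ ≤ 1) :
    (A.map Complex.ofReal - c • B.map Complex.ofReal).det ≠ 0 := by
  have hcB : ∀ i j, ‖c * B i j‖ ≤ B i j := fun i j => by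
    rw [norm_mul, Complex.norm_real, Real.norm_of_nonneg (hB i j)]
    exact mul_le_of_le_one_left (hB i j) hc
  refine det_ne_zero_of_dominated _ hAB (fun i => ?_) (fun i j hij => ?_)
  · have := norm_sub_norm_le (A i i : ℂ) (c * B i i)
    simp only [sub_apply, map_apply, smul_apply, smul_eq_mul, Complex.norm_real] at this ⊢
    linarith [Real.le_norm_self (A i i), hcB i i]
  · have := norm_sub_le (A i j : ℂ) (c * B i j)
    simp only [sub_apply, map_apply, smul_apply, smul_eq_mul, Complex.norm_real,
      Real.norm_of_nonpos (hA i j hij)] at this ⊢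
    linarith [hcB i j]

theorem det_map_ofReal (M : Matrix ι ι ℝ) : (M.map Complex.ofReal).det = M.det :=
  (RingHom.map_det Complex.ofRealHom M).symm

theorem mem_spectrum_map_inv_mul_iff {A B : Matrix ι ι ℝ} (hA : A.det ≠ 0) {μ : ℂ}
    (hμ : μ ≠ 0) : μ ∈ spectrum ℂ ((A⁻¹ * B).map Complex.ofReal) ↔
      (A.map Complex.ofReal - μ⁻¹ • B.map Complex.ofReal).det = 0 := by
  refine mem_spectrum_iff_det_sub_inv_smul_eq_zero ?_ ?_ hμ
  · have := (Matrix.map_mul (L := A) (M := A⁻¹ * B) (f := Complex.ofRealHom)).symm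
    rwa [← Matrix.mul_assoc, mul_nonsing_inv _ hA.isUnit, Matrix.one_mul] at this
  · rwa [det_map_ofReal, Complex.ofReal_ne_zero]

theorem norm_lt_one_of_mem_spectrum_map_inv_mul {A B : Matrix ι ι ℝ}
    (hA : ∀ i j, i ≠ j → A i j ≤ 0) (hAdet : A.det ≠ 0) (hB : ∀ i j, 0 ≤ B i j)
    (hAB : (A - B).IsSemipositive) :
    ∀ μ ∈ spectrum ℂ ((A⁻¹ * B).map Complex.ofReal), ‖μ‖ < 1 := by
  intro μ hμ
  by_contra! hμ1
  have hμ0 : μ ≠ 0 := by rintro rfl; norm_num at hμ1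
  exact det_map_sub_smul_ne_zero hA hB hAB (by rw [norm_inv]; exact inv_le_one_of_one_le₀ hμ1)
    ((mem_spectrum_map_inv_mul_iff hAdet hμ0).1 hμ)

theorem det_sub_smul_ne_zero_of_forall_norm_lt_one {A B : Matrix ι ι ℝ} (hA : A.det ≠ 0)
    (hρ : ∀ μ ∈ spectrum ℂ ((A⁻¹ * B).map Complex.ofReal), ‖μ‖ < 1) {t : ℝ}
    (ht : t ∈ Icc 0 1) : (A - t • B).det ≠ 0 := by
  intro h0
  rcases ht.1.eq_or_lt with rfl | ht0
  · simp [hA] at h0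
  have hmap : (A - t • B).map Complex.ofReal =
      A.map Complex.ofReal - (t : ℂ) • B.map Complex.ofReal := by
    ext; simp
  have hmem := (mem_spectrum_map_inv_mul_iff hA (μ := (t : ℂ)⁻¹) (by simpa using ht0.ne')).2
    (by rw [inv_inv, ← hmap, det_map_ofReal, h0, Complex.ofReal_zero])
  have := hρ _ hmem
  rw [norm_inv, Complex.norm_real, Real.norm_of_nonneg ht0.le] at this
  exact this.not_ge ((one_le_inv₀ ht0).2 ht.2)

end Matrix

open Matrix

theorem IsPMatrix.det_submatrix_pos {n : ℕ} {M : Matrix (Fin n) (Fin n) ℝ} (hP : IsPMatrix M)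
    {κ : Type*} [Fintype κ] [DecidableEq κ] [Nonempty κ] {f : κ → Fin n}
    (hf : Function.Injective f) : 0 < (M.submatrix f f).det := by
  let e : κ ≃ Finset.univ.map ⟨f, hf⟩ := Equiv.ofBijective
    (fun k => ⟨f k, Finset.mem_map_of_mem _ (Finset.mem_univ k)⟩)
    ⟨fun _ _ h => hf (congrArg Subtype.val h), fun ⟨_, hx⟩ => by
      obtain ⟨k, -, rfl⟩ := Finset.mem_map.1 hx
      exact ⟨k, rfl⟩⟩
  have := hP _ ((Finset.univ_nonempty (α := κ)).map (f := ⟨f, hf⟩))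
  rwa [← det_submatrix_equiv_self e] at this

theorem IsKMatrix.isSemipositive {n : ℕ} {M : Matrix (Fin n) (Fin n) ℝ} (hK : IsKMatrix M) :
    M.IsSemipositive := by
  induction n with
  | zero => exact ⟨0, finZeroElim, finZeroElim⟩
  | succ n ih =>
    obtain ⟨hZ, hP⟩ := hK
    let σ := (finSuccEquiv n).symm
    set M' := M.submatrix σ σ
    have hZ' : ∀ i j, i ≠ j → M' i j ≤ 0 := fun i j h => hZ _ _ (σ.injective.ne h)
    have ha : 0 < M' none none := by
      simpa [M'] using hP.det_submatrix_pos (f := fun _ : Unit => σ none)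
        (Function.injective_of_subsingleton _)
    have hS : IsKMatrix M'.schurComplementNone := by
      refine ⟨fun i j hij => ?_, fun s _ => ?_⟩
      · have := div_nonneg (mul_nonneg_of_nonpos_of_nonpos (hZ' (some i) none (by simp))
          (hZ' none (some j) (by simp))) ha.le
        simp only [schurComplementNone, of_apply]
        linarith [hZ' (some i) (some j) (by simpa using hij)]
      · let f : Option s → Option (Fin n) := Option.map (↑)
        have h : 0 < (M'.submatrix f f).det :=
          hP.det_submatrix_pos (σ.injective.comp (Option.map_injective Subtype.val_injective))
        rw [det_eq_mul_det_schurComplementNone (M'.submatrix f f) ha.ne'] at h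
        exact pos_of_mul_pos_right h ha.le
    simpa [M'] using ((ih hS).of_schurComplementNone hZ' ha).submatrix hZ' σ.symm.injective

theorem isKMatrix_iff_isSemipositive {n : ℕ} {M : Matrix (Fin n) (Fin n) ℝ} :
    IsKMatrix M ↔ IsZMatrix M ∧ M.IsSemipositive :=
  ⟨fun hK => ⟨hK.1, hK.isSemipositive⟩, fun ⟨hZ, hM⟩ => ⟨hZ, fun _ _ =>
    (hM.submatrix hZ Subtype.val_injective).det_pos fun _ _ h =>
      hZ _ _ (Subtype.val_injective.ne h)⟩⟩

/-- For a K-matrix `A` and an entrywise nonnegative matrix `B`, the spectral radius of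
`A⁻¹ B` is `< 1` (i.e. every complex eigenvalue has modulus `< 1`) iff `A - B` is a
K-matrix. -/
theorem stmt1 {n : ℕ} (A B : Matrix (Fin n) (Fin n) ℝ)
    (hA : IsKMatrix A) (hB : ∀ i j, 0 ≤ B i j) :
    (∀ μ ∈ spectrum ℂ ((A⁻¹ * B).map (Complex.ofReal)), ‖μ‖ < 1) ↔
      IsKMatrix (A - B) := by
  have hAdet : A.det ≠ 0 := hA.isSemipositive.det_ne_zero hA.1
  refine ⟨fun hρ => ?_, fun hAB => norm_lt_one_of_mem_spectrum_map_inv_mul hA.1 hAdet hB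
    (isKMatrix_iff_isSemipositive.1 hAB).2⟩
  have hZ : ∀ t : ℝ, 0 ≤ t → IsZMatrix (A - t • B) := fun t ht i j hij => by
    simpa using (hA.1 i j hij).trans (le_add_of_nonneg_right (mul_nonneg ht (hB i j)))
  refine isKMatrix_iff_isSemipositive.2 ⟨by simpa using hZ 1 zero_le_one, ?_⟩
  simpa using IsSemipositive.of_continuous (N := fun t => A - t • B) (by fun_prop) zero_le_one
    (fun t ht => hZ t ht.1) (fun t ht => det_sub_smul_ne_zero_of_forall_norm_lt_one hAdet hρ ht)
    (by simpa using hA.isSemipositive)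
end

section
/- For fixed constants A > 0, and functions B(λ) = h·φ(λ) − c·I and C(λ) = I·φ(λ) + h where φ(λ) = K − λ for some constant K, h > 0, c > 0, I > 0, the quantity p(λ) = clamp((B(λ) + √(B(λ)² + 2A·C(λ)))/A, 0, P) is monotonically nonincreasing in λ, where A = 2ch. -/
/-- Monotonicity of the proximal best-response power in the Lagrange multiplier:
`p(λ) = clamp((B(λ) + √(B(λ)² + 2 A C(λ)))/A, 0, P)` with `A = 2 c h`,
`B(λ) = h (K − λ) − c I`, `C(λ) = I (K − λ) + h` is nonincreasing in `λ`. -/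
theorem stmt7 (h c I K P : ℝ) (hh : 0 < h) (hc : 0 < c) (hI : 0 < I) (hP : 0 < P)
    (A : ℝ) (hA : A = 2 * c * h)
    (B C : ℝ → ℝ)
    (hB : ∀ lam, B lam = h * (K - lam) - c * I)
    (hC : ∀ lam, C lam = I * (K - lam) + h)
    (p : ℝ → ℝ)
    (hp : ∀ lam, p lam =
      max 0 (min P ((B lam + Real.sqrt ((B lam) ^ 2 + 2 * A * C lam)) / A))) :
    Antitone p := by
  have hApos : 0 < A := by rw [hA]; positivity
  intro a b hab
  rw [hp a, hp b]
  -- key: numerator at b ≤ numerator at a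
  have hDb : (B b) ^ 2 + 2 * A * C b = (h * (K - b) + c * I) ^ 2 + 4 * c * h ^ 2 := by
    rw [hB, hC, hA]; ring
  have hDbnn : 0 ≤ (B b) ^ 2 + 2 * A * C b := by rw [hDb]; positivity
  have hsb := Real.sq_sqrt hDbnn
  have hsbnn := Real.sqrt_nonneg ((B b) ^ 2 + 2 * A * C b)
  set sb := Real.sqrt ((B b) ^ 2 + 2 * A * C b) with hsbdef
  -- sb ≥ -(h*(K-b)+c*I)
  have hsb_lb : -(h * (K - b) + c * I) ≤ sb := by
    have h1 : Real.sqrt ((h * (K - b) + c * I) ^ 2) ≤ sb := by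
      apply Real.sqrt_le_sqrt
      rw [hDb]; nlinarith [sq_nonneg h]
    rw [Real.sqrt_sq_eq_abs] at h1
    calc -(h * (K - b) + c * I) ≤ |h * (K - b) + c * I| := neg_le_abs _
      _ ≤ sb := h1
  have key : B b + sb ≤ B a + Real.sqrt ((B a) ^ 2 + 2 * A * C a) := by
    rcases le_or_gt (B b + sb - B a) 0 with ht | ht
    · nlinarith [Real.sqrt_nonneg ((B a) ^ 2 + 2 * A * C a)]
    · have : B b + sb - B a ≤ Real.sqrt ((B a) ^ 2 + 2 * A * C a) := by
        rw [show (B b + sb - B a ≤ Real.sqrt ((B a) ^ 2 + 2 * A * C a)) ↔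
          ((B b + sb - B a) ^ 2 ≤ (B a) ^ 2 + 2 * A * C a) from
          Real.le_sqrt ht.le (by rw [show (B a)^2 + 2*A*C a = (h*(K-a)+c*I)^2 + 4*c*h^2 by rw [hB, hC, hA]; ring]; positivity)]
        have hd : 0 ≤ B a - B b := by
          rw [hB, hB]; nlinarith
        have hmul : 0 ≤ (B a - B b) * (sb + (h * (K - b) + c * I)) :=
          mul_nonneg hd (by linarith)
        simp only [hB, hC, hA] at hmul hsb hd ⊢
        nlinarith [hmul, hsb, hd]
      linarith
  have hdiv : (B b + sb) / A ≤ (B a + Real.sqrt ((B a) ^ 2 + 2 * A * C a)) / A :=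
    by gcongr
  exact max_le_max le_rfl (min_le_min le_rfl hdiv)
end
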